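/- arXiv:2602.22577 — 7 statements merged into one kernel-verified Lean document; each statement's English description precedes it below -/
import Mathlib

section
/- Let A ∈ ℝ^{n×n}, B ∈ ℝ^{n×m}, Q ∈ ℝ^{n×n} symmetric, R ∈ ℝ^{m×m} symmetric positive definite, and W ∈ ℝ^{n×n} symmetric. Suppose P* ∈ ℝ^{n×n} is symmetric and satisfies the continuous-time algebraic Riccati equation AᵀP* + P*A + Q − P*BR⁻¹BᵀP* = 0, and set K* = −R⁻¹BᵀP*. Let K ∈ ℝ^{m×n} and let X ∈ ℝ^{n×n} be symmetric and satisfy the continuous-time Lyapunov equation (A+BK)X + X(A+BK)ᵀ + W = 0. Then the completion-of-squares identity holds: trace((Q + KᵀRK)X) = trace(P*W) + trace((K−K*)ᵀR(K−K*)X). In particular, if X is positive semidefinite, then trace((Q+KᵀRK)X) − trace(P*W) ≥ trace(R(K−K*)X(K−K*)ᵀ) ≥ 0. -/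
/-!
With `K* = -R⁻¹BᵀP*`, the Riccati equation rewrites the stage cost as a completed square minus a
Lyapunov derivative along the closed loop `A + BK`:
`Q + KᵀRK = (K - K*)ᵀR(K - K*) - ((A + BK)ᵀP* + P*(A + BK))`.
Against `X`, cyclicity of the trace and the Lyapunov equation turn the second term into `trace (P* W)`.
The remaining term is the trace of a product of two positive semidefinite matrices, hence
nonnegative.
-/

open Matrix

namespace Matrix

variable {ι κ α : Type*} [Fintype ι] [Fintype κ]

open scoped ComplexOrder MatrixOrder in
theorem PosSemidef.trace_mul_nonneg {𝕜 : Type*} [RCLike 𝕜] {M N : Matrix ι ι 𝕜}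
    (hM : M.PosSemidef) (hN : N.PosSemidef) : 0 ≤ (M * N).trace := by
  classical
  obtain ⟨C, rfl⟩ := CStarAlgebra.nonneg_iff_eq_star_mul_self.mp hN.nonneg
  rw [star_eq_conjTranspose, ← Matrix.mul_assoc, trace_mul_cycle]
  exact (hM.mul_mul_conjTranspose_same C).trace_nonneg

variable [CommRing α]

theorem trace_lyapunov_mul_eq_neg_trace_mul {F P X W : Matrix ι ι α}
    (hLyap : F * X + X * Fᵀ + W = 0) :
    ((Fᵀ * P + P * F) * X).trace = -(P * W).trace := by
  have hW : W = -(F * X + X * Fᵀ) := eq_neg_of_add_eq_zero_right hLyap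
  have hcycle : (Fᵀ * P * X).trace = (P * (X * Fᵀ)).trace := by
    rw [Matrix.mul_assoc, trace_mul_comm, Matrix.mul_assoc]
  rw [hW, Matrix.add_mul, trace_add, hcycle, Matrix.mul_assoc, Matrix.mul_neg, trace_neg,
    Matrix.mul_add, trace_add, add_comm, neg_neg]

theorem riccati_completion_of_squares [DecidableEq κ] {A Q P : Matrix ι ι α}
    {B : Matrix ι κ α} {R : Matrix κ κ α} {Kstar : Matrix κ ι α} (K : Matrix κ ι α)
    (hR : IsUnit R.det) (hRsymm : R.IsSymm) (hPsymm : P.IsSymm)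
    (hRic : Aᵀ * P + P * A + Q - P * B * R⁻¹ * Bᵀ * P = 0)
    (hKs : Kstar = -(R⁻¹ * Bᵀ * P)) :
    Q + Kᵀ * R * K =
      (K - Kstar)ᵀ * R * (K - Kstar) - ((A + B * K)ᵀ * P + P * (A + B * K)) := by
  have hQ : Q = P * B * R⁻¹ * Bᵀ * P - Aᵀ * P - P * A := by
    linear_combination (norm := abel) hRic
  subst hKs hQ
  simp only [sub_neg_eq_add, transpose_add, transpose_mul, transpose_transpose,
    transpose_nonsing_inv, hPsymm.eq, hRsymm.eq, Matrix.add_mul, Matrix.mul_add, Matrix.mul_assoc,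
    mul_nonsing_inv_cancel_left _ _ hR, nonsing_inv_mul_cancel_left _ _ hR]
  abel

end Matrix

theorem stmt_4_general {n m : ℕ}
    (A : Matrix (Fin n) (Fin n) ℝ) (B : Matrix (Fin n) (Fin m) ℝ)
    (Q W Pstar X : Matrix (Fin n) (Fin n) ℝ)
    (R : Matrix (Fin m) (Fin m) ℝ)
    (K Kstar : Matrix (Fin m) (Fin n) ℝ)
    (hR : R.PosDef)
    (hPsSym : Pstar.IsHermitian)
    (hRic : Aᵀ * Pstar + Pstar * A + Q - Pstar * B * R⁻¹ * Bᵀ * Pstar = 0)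
    (hKs : Kstar = -(R⁻¹ * Bᵀ * Pstar))
    (hXEq : (A + B * K) * X + X * (A + B * K)ᵀ + W = 0) :
    Matrix.trace ((Q + Kᵀ * R * K) * X) =
        Matrix.trace (Pstar * W) +
          Matrix.trace ((K - Kstar)ᵀ * R * (K - Kstar) * X) ∧
      (X.PosSemidef →
        Matrix.trace (R * (K - Kstar) * X * (K - Kstar)ᵀ) ≤
            Matrix.trace ((Q + Kᵀ * R * K) * X) - Matrix.trace (Pstar * W) ∧
          0 ≤ Matrix.trace (R * (K - Kstar) * X * (K - Kstar)ᵀ)) := by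
  have hsquare := riccati_completion_of_squares K ((isUnit_iff_isUnit_det R).mp hR.isUnit)
    (isHermitian_iff_isSymm.mp hR.isHermitian) (isHermitian_iff_isSymm.mp hPsSym) hRic hKs
  have hidentity : ((Q + Kᵀ * R * K) * X).trace =
      (Pstar * W).trace + ((K - Kstar)ᵀ * R * (K - Kstar) * X).trace := by
    rw [hsquare, Matrix.sub_mul, trace_sub, trace_lyapunov_mul_eq_neg_trace_mul hXEq]
    ring
  have hcycle : (R * (K - Kstar) * X * (K - Kstar)ᵀ).trace =
      ((K - Kstar)ᵀ * R * (K - Kstar) * X).trace := by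
    rw [trace_mul_comm]
    simp only [Matrix.mul_assoc]
  refine ⟨hidentity, fun hX => ⟨by rw [hcycle, hidentity]; simp, ?_⟩⟩
  rw [hcycle, ← conjTranspose_eq_transpose_of_trivial]
  exact (hR.posSemidef.conjTranspose_mul_mul_same _).trace_mul_nonneg hX

/-- Completion-of-squares identity for the continuous-time LQR, and the resulting lower
bound on the optimality gap. -/
theorem stmt_4 {n m : ℕ}
    (A : Matrix (Fin n) (Fin n) ℝ) (B : Matrix (Fin n) (Fin m) ℝ)
    (Q W Pstar X : Matrix (Fin n) (Fin n) ℝ)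
    (R : Matrix (Fin m) (Fin m) ℝ)
    (K Kstar : Matrix (Fin m) (Fin n) ℝ)
    (hQ : Q.IsHermitian) (hR : R.PosDef) (hW : W.IsHermitian)
    (hPsSym : Pstar.IsHermitian)
    (hRic : Aᵀ * Pstar + Pstar * A + Q - Pstar * B * R⁻¹ * Bᵀ * Pstar = 0)
    (hKs : Kstar = -(R⁻¹ * Bᵀ * Pstar))
    (hX : X.IsHermitian)
    (hXEq : (A + B * K) * X + X * (A + B * K)ᵀ + W = 0) :
    Matrix.trace ((Q + Kᵀ * R * K) * X) =
        Matrix.trace (Pstar * W) +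
          Matrix.trace ((K - Kstar)ᵀ * R * (K - Kstar) * X) ∧
      (X.PosSemidef →
        Matrix.trace (R * (K - Kstar) * X * (K - Kstar)ᵀ) ≤
            Matrix.trace ((Q + Kᵀ * R * K) * X) - Matrix.trace (Pstar * W) ∧
          0 ≤ Matrix.trace (R * (K - Kstar) * X * (K - Kstar)ᵀ)) :=
  stmt_4_general A B Q W Pstar X R K Kstar hR hPsSym hRic hKs hXEq
end

section
/- Let A ∈ ℝ^{n×n}, B ∈ ℝ^{n×m}, let Q ∈ ℝ^{n×n} be symmetric positive semidefinite, R ∈ ℝ^{m×m} symmetric positive definite, and W ∈ ℝ^{n×n} symmetric positive definite. Suppose P* ∈ ℝ^{n×n} is symmetric positive semidefinite and satisfies P* = AᵀP*A + Q − AᵀP*B(R+BᵀP*B)⁻¹BᵀP*A; set K* = −(R+BᵀP*B)⁻¹BᵀP*A, assume A + BK* is Schur stable, and let X* be the symmetric solution of (A+BK*)X*(A+BK*)ᵀ − X* + W = 0. Let K ∈ ℝ^{m×n} with A + BK Schur stable, let X be the symmetric solution of (A+BK)X(A+BK)ᵀ − X + W = 0, and let P be the symmetric solution of (A+BK)ᵀP(A+BK)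 − P + Q + KᵀRK = 0. Then trace((Q+KᵀRK)X) − trace((Q+K*ᵀRK*)X*) ≤ 2·trace((K−K*)ᵀ((R+BᵀPB)K + BᵀPA)X*). -/
/-!
Write `L = A + BK`, `L* = A + BK*` and `D = K - K*`. By the Lyapunov equations and cyclicity
of the trace, `J(K) = tr((Q + KᵀRK) X) = tr(P W) = tr((P - L*ᵀ P L*) X*)`. Expanding the quadratic
map `K ↦ (A + BK)ᵀ P (A + BK) + KᵀRK` exactly around `K`, using the equation for `P`, gives
`P - L*ᵀ P L* = Q + K*ᵀRK* + DᵀE + EᵀD - Dᵀ(R + BᵀPB)D` with `E = (R + BᵀPB)K + BᵀPA`,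
so `J(K) - J(K*) = 2 tr(DᵀE X*) - tr(Dᵀ(R + BᵀPB)D X*)`. Schur stability makes the solutions
`P` and `X*` of the Lyapunov equations positive semidefinite, so the last trace is nonnegative.
-/

open Matrix

noncomputable section

def IsSchur {n : ℕ} (M : Matrix (Fin n) (Fin n) ℝ) : Prop :=
  ∀ μ ∈ spectrum ℂ (M.map Complex.ofReal), ‖μ‖ < 1

open Filter Topology

theorem tendsto_pow_atTop_nhds_zero_of_spectralRadius_lt_one {A : Type*} [NormedRing A]
    [NormedAlgebra ℂ A] [CompleteSpace A] {a : A} (ha : spectralRadius ℂ a < 1) :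
    Tendsto (a ^ ·) atTop (𝓝 0) := by
  obtain ⟨r, hρr, hr1⟩ := ENNReal.lt_iff_exists_nnreal_btwn.mp ha
  have hbound : ∀ᶠ k : ℕ in atTop, ‖a ^ k‖ ≤ (r : ℝ) ^ k := by
    have hgelfand := spectrum.pow_nnnorm_pow_one_div_tendsto_nhds_spectralRadius a
    filter_upwards [hgelfand.eventually_lt_const hρr, eventually_ge_atTop 1] with k hk hk1
    have hk0 : (k : ℝ) ≠ 0 := by positivity
    have := ENNReal.rpow_lt_rpow hk (by positivity : (0 : ℝ) < k)
    rw [← ENNReal.rpow_mul, one_div_mul_cancel hk0, ENNReal.rpow_one, ENNReal.rpow_natCast,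
      ← ENNReal.coe_pow, ENNReal.coe_lt_coe] at this
    exact_mod_cast this.le
  exact squeeze_zero_norm' hbound
    (tendsto_pow_atTop_nhds_zero_of_lt_one r.coe_nonneg (by exact_mod_cast hr1))

namespace IsSchur

variable {n : ℕ} {M : Matrix (Fin n) (Fin n) ℝ}

theorem spectralRadius_lt_one (hM : IsSchur M) : spectralRadius ℂ (M.map Complex.ofReal) < 1 := by
  have hfin := (M.map Complex.ofReal).finite_spectrum
  rw [spectralRadius, ← hfin.coe_toFinset]
  simp_rw [Finset.mem_coe]
  rw [← Finset.sup_eq_iSup]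
  refine (Finset.sup_lt_iff zero_lt_one).2 fun μ hμ => ?_
  rw [hfin.mem_toFinset] at hμ
  exact_mod_cast hM μ hμ

theorem tendsto_pow_atTop_nhds_zero (hM : IsSchur M) : Tendsto (M ^ ·) atTop (𝓝 0) := by
  -- Any norm inducing the product topology will do to run the Banach-algebra argument over `ℂ`.
  let := Matrix.linftyOpNormedRing (n := Fin n) (α := ℂ)
  let := Matrix.linftyOpNormedAlgebra (n := Fin n) (R := ℂ) (α := ℂ)
  have h := tendsto_pow_atTop_nhds_zero_of_spectralRadius_lt_one hM.spectralRadius_lt_one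
  have hre := ((continuous_id.matrix_map Complex.continuous_re).tendsto 0).comp h
  have hpow (k : ℕ) : (M.map Complex.ofReal ^ k).map Complex.re = M ^ k := by
    change (M.map Complex.ofRealHom ^ k).map Complex.re = _
    rw [← Matrix.map_pow, Matrix.map_map]
    ext; simp
  simpa [Function.comp_def, hpow] using hre

theorem transpose (hM : IsSchur M) : IsSchur Mᵀ := fun μ hμ => hM μ <| by
  rw [spectrum.mem_iff] at hμ ⊢
  rwa [← isUnit_transpose, transpose_sub, algebraMap_eq_diagonal, diagonal_transpose,
    ← algebraMap_eq_diagonal]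

theorem posSemidef_of_eq_mul_mul_transpose_add {Y C : Matrix (Fin n) (Fin n) ℝ}
    (hM : IsSchur M) (hY : Y.IsHermitian) (hC : C.PosSemidef) (h : Y = M * Y * Mᵀ + C) :
    Y.PosSemidef := by
  refine .of_dotProduct_mulVec_nonneg hY fun x => ?_
  let q (N : Matrix (Fin n) (Fin n) ℝ) : ℝ := star x ⬝ᵥ (N * Y * Nᵀ) *ᵥ x
  have hq : Continuous q := by fun_prop
  have hstep (N : Matrix (Fin n) (Fin n) ℝ) : q (N * M) ≤ q N := by
    have hsplit : N * Y * Nᵀ = N * M * Y * (N * M)ᵀ + N * C * Nᵀ := by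
      conv_lhs => rw [h]
      simp only [transpose_mul, Matrix.add_mul, Matrix.mul_add, Matrix.mul_assoc]
    have := (hC.mul_mul_conjTranspose_same N).dotProduct_mulVec_nonneg x
    simp only [q, hsplit, add_mulVec, dotProduct_add]
    simp only [conjTranspose_eq_transpose_of_trivial] at this
    linarith
  have hanti : Antitone fun k : ℕ => q (M ^ k) :=
    antitone_nat_of_succ_le fun k => by simpa only [pow_succ] using hstep (M ^ k)
  have hlim : Tendsto (fun k : ℕ => q (M ^ k)) atTop (𝓝 (q 0)) :=
    (hq.tendsto 0).comp hM.tendsto_pow_atTop_nhds_zero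
  simpa [q] using hanti.le_of_tendsto hlim 0

end IsSchur

namespace Matrix

variable {m n R : Type*} [Fintype m] [Fintype n]

theorem PosSemidef.transpose_mul_mul_same_of_real {A : Matrix n n ℝ} (hA : A.PosSemidef)
    (B : Matrix n m ℝ) : (Bᵀ * A * B).PosSemidef := by
  simpa using hA.conjTranspose_mul_mul_same B

open scoped ComplexOrder in
theorem PosSemidef.trace_mul_nonneg_s7 {𝕜 : Type*} [RCLike 𝕜] {A B : Matrix n n 𝕜}
    (hA : A.PosSemidef) (hB : B.PosSemidef) : 0 ≤ (A * B).trace := by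
  classical
  open scoped MatrixOrder in
  obtain ⟨D, rfl⟩ := CStarAlgebra.nonneg_iff_eq_star_mul_self.mp hB.nonneg
  rw [star_eq_conjTranspose, ← Matrix.mul_assoc, trace_mul_cycle]
  exact (hA.mul_mul_conjTranspose_same D).trace_nonneg

theorem trace_lyapunov_adjoint [CommRing R] (P L X : Matrix n n R) :
    ((P - Lᵀ * P * L) * X).trace = (P * (X - L * X * Lᵀ)).trace := by
  rw [Matrix.sub_mul, Matrix.mul_sub, trace_sub, trace_sub, Matrix.mul_assoc, Matrix.mul_assoc,
    trace_mul_comm Lᵀ, Matrix.mul_assoc, Matrix.mul_assoc]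

theorem sub_transpose_mul_mul_eq_of_lyapunov [CommRing R] {A : Matrix n n R} {B : Matrix n m R}
    {P Q : Matrix n n R} {S : Matrix m m R} {K : Matrix m n R} (hP : Pᵀ = P) (hS : Sᵀ = S)
    (hPEq : (A + B * K)ᵀ * P * (A + B * K) - P + Q + Kᵀ * S * K = 0) (K' : Matrix m n R) :
    P - (A + B * K')ᵀ * P * (A + B * K') =
      Q + K'ᵀ * S * K'
        + ((K - K')ᵀ * ((S + Bᵀ * P * B) * K + Bᵀ * P * A)
          + ((S + Bᵀ * P * B) * K + Bᵀ * P * A)ᵀ * (K - K')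
          - (K - K')ᵀ * (S + Bᵀ * P * B) * (K - K')) := by
  rw [← sub_eq_zero, ← neg_eq_zero, ← hPEq]
  simp only [transpose_add, transpose_sub, transpose_mul, transpose_transpose, hP, hS,
    Matrix.add_mul, Matrix.mul_add, Matrix.sub_mul, Matrix.mul_sub, Matrix.mul_assoc]
  abel

theorem trace_transpose_mul_mul_of_transpose_eq [CommRing R] (D E : Matrix m n R)
    {X : Matrix n n R} (hX : Xᵀ = X) : (Eᵀ * D * X).trace = (Dᵀ * E * X).trace := by
  rw [← trace_transpose, transpose_mul, transpose_mul, transpose_transpose, hX, trace_mul_comm,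
    Matrix.mul_assoc]

end Matrix

theorem stmt_7_general {n m : ℕ}
    (A : Matrix (Fin n) (Fin n) ℝ) (B : Matrix (Fin n) (Fin m) ℝ)
    (Q W Xstar X P : Matrix (Fin n) (Fin n) ℝ)
    (R : Matrix (Fin m) (Fin m) ℝ)
    (K Kstar : Matrix (Fin m) (Fin n) ℝ)
    (hQ : Q.PosSemidef) (hR : R.PosDef) (hW : W.PosDef)
    (hSchurKs : IsSchur (A + B * Kstar))
    (hXs : Xstar.IsHermitian)
    (hXsEq : (A + B * Kstar) * Xstar * (A + B * Kstar)ᵀ - Xstar + W = 0)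
    (hSchurK : IsSchur (A + B * K))
    (hXEq : (A + B * K) * X * (A + B * K)ᵀ - X + W = 0)
    (hP : P.IsHermitian)
    (hPEq : (A + B * K)ᵀ * P * (A + B * K) - P + Q + Kᵀ * R * K = 0) :
    Matrix.trace ((Q + Kᵀ * R * K) * X) -
        Matrix.trace ((Q + Kstarᵀ * R * Kstar) * Xstar) ≤
      2 * Matrix.trace ((K - Kstar)ᵀ * ((R + Bᵀ * P * B) * K + Bᵀ * P * A) * Xstar) := by
  have hPt : Pᵀ = P := by simpa using hP.eq
  have hRt : Rᵀ = R := by simpa using hR.isHermitian.eq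
  have hXst : Xstarᵀ = Xstar := by simpa using hXs.eq
  have hcost : Q + Kᵀ * R * K = P - (A + B * K)ᵀ * P * (A + B * K) := by
    rw [← sub_eq_zero, ← hPEq]; abel
  have hgap := sub_transpose_mul_mul_eq_of_lyapunov hPt hRt hPEq Kstar
  set D := K - Kstar
  set S := R + Bᵀ * P * B
  set E := S * K + Bᵀ * P * A
  have hXW : X - (A + B * K) * X * (A + B * K)ᵀ = W := by
    rw [← sub_eq_zero, ← neg_eq_zero, ← hXEq]; abel
  have hXsW : Xstar - (A + B * Kstar) * Xstar * (A + B * Kstar)ᵀ = W := by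
    rw [← sub_eq_zero, ← neg_eq_zero, ← hXsEq]; abel
  have hPpsd : P.PosSemidef := hSchurK.transpose.posSemidef_of_eq_mul_mul_transpose_add hP
    (hQ.add (hR.posSemidef.transpose_mul_mul_same_of_real K))
    (by rw [transpose_transpose, hcost]; abel)
  have hXspsd : Xstar.PosSemidef := hSchurKs.posSemidef_of_eq_mul_mul_transpose_add hXs
    hW.posSemidef (by rw [← hXsW]; abel)
  have hDSD : 0 ≤ (Dᵀ * S * D * Xstar).trace := PosSemidef.trace_mul_nonneg_s7
    ((hR.posSemidef.add (hPpsd.transpose_mul_mul_same_of_real B)).transpose_mul_mul_same_of_real D)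
    hXspsd
  calc ((Q + Kᵀ * R * K) * X).trace - ((Q + Kstarᵀ * R * Kstar) * Xstar).trace
      = ((Dᵀ * E + Eᵀ * D - Dᵀ * S * D) * Xstar).trace := by
        rw [hcost, trace_lyapunov_adjoint, hXW, ← hXsW, ← trace_lyapunov_adjoint, hgap,
          Matrix.add_mul, trace_add]
        ring
    _ = 2 * (Dᵀ * E * Xstar).trace - (Dᵀ * S * D * Xstar).trace := by
        rw [Matrix.sub_mul, Matrix.add_mul, trace_sub, trace_add,
          trace_transpose_mul_mul_of_transpose_eq D E hXst]
        ring
    _ ≤ 2 * (Dᵀ * E * Xstar).trace := by linarith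

/-- Upper bound on the optimality gap in the discrete-time LQR. -/
theorem stmt_7 {n m : ℕ}
    (A : Matrix (Fin n) (Fin n) ℝ) (B : Matrix (Fin n) (Fin m) ℝ)
    (Q W Pstar Xstar X P : Matrix (Fin n) (Fin n) ℝ)
    (R : Matrix (Fin m) (Fin m) ℝ)
    (K Kstar : Matrix (Fin m) (Fin n) ℝ)
    (hQ : Q.PosSemidef) (hR : R.PosDef) (hW : W.PosDef)
    (hPs : Pstar.PosSemidef)
    (hRic : Pstar = Aᵀ * Pstar * A + Q -
      Aᵀ * Pstar * B * (R + Bᵀ * Pstar * B)⁻¹ * Bᵀ * Pstar * A)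
    (hKs : Kstar = -((R + Bᵀ * Pstar * B)⁻¹ * Bᵀ * Pstar * A))
    (hSchurKs : IsSchur (A + B * Kstar))
    (hXs : Xstar.IsHermitian)
    (hXsEq : (A + B * Kstar) * Xstar * (A + B * Kstar)ᵀ - Xstar + W = 0)
    (hSchurK : IsSchur (A + B * K))
    (hX : X.IsHermitian)
    (hXEq : (A + B * K) * X * (A + B * K)ᵀ - X + W = 0)
    (hP : P.IsHermitian)
    (hPEq : (A + B * K)ᵀ * P * (A + B * K) - P + Q + Kᵀ * R * K = 0) :
    Matrix.trace ((Q + Kᵀ * R * K) * X) -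
        Matrix.trace ((Q + Kstarᵀ * R * Kstar) * Xstar) ≤
      2 * Matrix.trace ((K - Kstar)ᵀ * ((R + Bᵀ * P * B) * K + Bᵀ * P * A) * Xstar) :=
  stmt_7_general A B Q W Xstar X P R K Kstar hQ hR hW hSchurKs hXs hXsEq hSchurK hXEq hP hPEq
end
end

section
/- Let M ∈ ℝ^{n×n} be Hurwitz stable, let W ∈ ℝ^{n×n} be symmetric positive semidefinite, and let S ∈ ℝ^{n×n} be symmetric. Then the matrix-valued integral X = ∫₀^∞ exp(tM) W exp(tMᵀ) dt exists (the integrand is integrable entrywise on [0,∞)), X is symmetric positive semidefinite and is the unique solution of the continuous-time Lyapunov equation M X + X Mᵀ + W = 0, and ∫₀^∞ trace(S·exp(tM) W exp(tMᵀ)) dt = trace(S X). -/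
/-!
On each generalized eigenvector of `M` (over `ℂ`), `exp (t • M)` acts as `e^{tμ}` times a
polynomial in `t`, so for a Hurwitz matrix `‖exp (t • M)‖ = O(e^{-εt})`. Hence the flow
`G_B t = exp (t • M) * B * exp (t • Mᵀ)` is integrable on `[0, ∞)` and tends to `0`, and since
`G_B' = M G_B + G_B Mᵀ = G_{MB + BMᵀ}`, the fundamental theorem of calculus gives
`∫₀^∞ G_{MB + BMᵀ} = -B` for every `B`. For the integral `X` of `G_W` this is the Lyapunov
equation; for `D` with `MD + DMᵀ = 0` it gives `D = 0`, which is uniqueness. Positivity and the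
trace formula follow by pulling linear functionals through the (entrywise) integral.
-/

open Matrix MeasureTheory

noncomputable section

/-- A real square matrix is Hurwitz stable if every complex eigenvalue has negative real part. -/
def IsHurwitz {n : ℕ} (M : Matrix (Fin n) (Fin n) ℝ) : Prop :=
  ∀ μ ∈ spectrum ℂ (M.map Complex.ofReal), μ.re < 0

open Asymptotics Filter Topology NormedSpace Finset Nat

theorem isBigO_pow_mul_exp_of_lt {r ε : ℝ} (h : r < -ε) (i : ℕ) :
    (fun t : ℝ => t ^ i * Real.exp (r * t)) =O[atTop] fun t => Real.exp (-ε * t) := by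
  have := (isLittleO_pow_exp_pos_mul_atTop i (b := -ε - r) (by linarith)).isBigO.mul
    (isBigO_refl (fun t => Real.exp (r * t)) atTop)
  refine this.congr_right fun t => ?_
  rw [← Real.exp_add]
  ring_nf

section ExpDecay

variable {𝔸 : Type*} [NormedRing 𝔸] [NormedAlgebra ℂ 𝔸] [CompleteSpace 𝔸]

theorem exp_smul_mul_eq_sum_of_pow_mul_eq_zero {a b : 𝔸} {μ : ℂ} {k : ℕ}
    (hb : (a - algebraMap ℂ 𝔸 μ) ^ k * b = 0) (z : ℂ) :
    exp (z • a) * b = Complex.exp (z * μ) •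
      ∑ i ∈ range k, (z ^ i / i !) • ((a - algebraMap ℂ 𝔸 μ) ^ i * b) := by
  let +nondep : NormedAlgebra ℚ 𝔸 := NormedAlgebra.restrictScalars ℚ ℂ 𝔸
  set N := a - algebraMap ℂ 𝔸 μ
  have hsplit : z • a = algebraMap ℂ 𝔸 (z * μ) + z • N := by
    rw [map_mul, ← Algebra.smul_def, ← smul_add, add_sub_cancel]
  have hvanish : ∀ i ∉ range k, ((i ! : ℂ)⁻¹ • (z • N) ^ i) * b = 0 := by
    intro i hi
    obtain ⟨j, rfl⟩ := Nat.exists_eq_add_of_le' (not_lt.mp (mem_range.not.mp hi))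
    rw [smul_pow, smul_mul_assoc, smul_mul_assoc, pow_add N, mul_assoc, hb, mul_zero, smul_zero,
      smul_zero]
  have hseries := (exp_series_hasSum_exp' (𝕂 := ℂ) (z • N)).mul_right b
  rw [hsplit, NormedSpace.exp_add_of_commute (Algebra.commutes _ _), ← algebraMap_exp_comm,
    mul_assoc, ← Algebra.smul_def, ← Complex.exp_eq_exp_ℂ,
    hseries.unique (hasSum_sum_of_ne_finset_zero hvanish)]
  refine congrArg _ (sum_congr rfl fun i _ => ?_)
  rw [smul_pow, smul_smul, smul_mul_assoc, div_eq_inv_mul]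

theorem isBigO_exp_smul_mul_of_pow_mul_eq_zero {a b : 𝔸} {μ : ℂ} {k : ℕ} {ε : ℝ}
    (hb : (a - algebraMap ℂ 𝔸 μ) ^ k * b = 0) (hμ : μ.re < -ε) :
    (fun t : ℝ => exp ((t : ℂ) • a) * b) =O[atTop] fun t => Real.exp (-ε * t) := by
  simp_rw [exp_smul_mul_eq_sum_of_pow_mul_eq_zero hb, smul_sum]
  refine IsBigO.fun_sum fun i _ => IsBigO.trans ?_ (isBigO_pow_mul_exp_of_lt hμ i)
  generalize (a - algebraMap ℂ 𝔸 μ) ^ i * b = v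
  refine isBigO_of_le' (c := ‖v‖) _ fun t => ?_
  have hfac : (1 : ℝ) ≤ i ! := mod_cast i.factorial_pos
  rw [norm_smul, norm_smul, Complex.norm_exp, Complex.re_ofReal_mul, norm_div, norm_pow,
    Complex.norm_real, Complex.norm_natCast, norm_mul, norm_pow, Real.norm_eq_abs,
    Real.norm_of_nonneg (Real.exp_nonneg _), mul_comm t]
  calc Real.exp (μ.re * t) * (|t| ^ i / i ! * ‖v‖)
      ≤ Real.exp (μ.re * t) * (|t| ^ i * ‖v‖) := by
        gcongr
        exact div_le_self (by positivity) hfac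
    _ = ‖v‖ * (|t| ^ i * Real.exp (μ.re * t)) := by ring

theorem isBigO_exp_smul_of_forall_re_lt [FiniteDimensional ℂ 𝔸] {a : 𝔸} {ε : ℝ}
    (h : ∀ μ ∈ spectrum ℂ a, μ.re < -ε) :
    (fun t : ℝ => exp ((t : ℂ) • a)) =O[atTop] fun t => Real.exp (-ε * t) := by
  let decaying : Submodule ℂ 𝔸 :=
    { carrier := {b | (fun t : ℝ => exp ((t : ℂ) • a) * b) =O[atTop] fun t => Real.exp (-ε * t)}
      add_mem' := fun hb hc => (hb.add hc).congr_left fun t => (mul_add _ _ _).symm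
      zero_mem' := by simpa using isBigO_zero _ _
      smul_mem' := fun c b hb =>
        (hb.const_smul_left c).congr_left fun t => (mul_smul_comm c _ b).symm }
  -- The generalized eigenspaces of left multiplication by `a` span `𝔸`, and those for
  -- `μ ∉ spectrum ℂ a` are trivial.
  have hle : ⨆ μ, (Algebra.lmul ℂ 𝔸 a).maxGenEigenspace μ ≤ decaying := by
    refine iSup_le fun μ b hb => ?_
    obtain ⟨k, hk⟩ := (Module.End.mem_maxGenEigenspace _ _ _).mp hb
    have hk : (a - algebraMap ℂ 𝔸 μ) ^ k * b = 0 := by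
      rwa [← Algebra.algebraMap_eq_smul_one, ← AlgHom.commutes (Algebra.lmul ℂ 𝔸), ← map_sub,
        ← map_pow] at hk
    by_cases hμ : μ ∈ spectrum ℂ a
    · exact isBigO_exp_smul_mul_of_pow_mul_eq_zero hk (h μ hμ)
    · have hb0 : b = 0 := by
        have hunit := (spectrum.notMem_iff.mp hμ).neg
        rw [neg_sub] at hunit
        exact (hunit.pow k).mul_right_eq_zero.mp hk
      rw [hb0]
      exact decaying.zero_mem
  have h1 : (fun t : ℝ => exp ((t : ℂ) • a) * 1) =O[atTop] fun t => Real.exp (-ε * t) :=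
    hle (Module.End.iSup_maxGenEigenspace_eq_top (Algebra.lmul ℂ 𝔸 a) ▸ Submodule.mem_top)
  simpa only [mul_one] using h1

end ExpDecay

theorem hasDerivAt_exp_smul_mul_mul_exp_smul {𝔸 : Type*} [NormedRing 𝔸] [NormedAlgebra ℝ 𝔸]
    [CompleteSpace 𝔸] (a b c : 𝔸) (t : ℝ) :
    HasDerivAt (fun u : ℝ => exp (u • a) * b * exp (u • c))
      (a * (exp (t • a) * b * exp (t • c)) + exp (t • a) * b * exp (t • c) * c) t := by
  have hc : Commute c (exp (t • c)) := ((Commute.refl c).smul_right t).exp_right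
  refine (((hasDerivAt_exp_smul_const' a t).mul_const b).mul
    (hasDerivAt_exp_smul_const' c t)).congr_deriv ?_
  rw [hc.eq]
  simp only [mul_assoc]

theorem IsCompact.exists_pos_forall_re_lt_neg {K : Set ℂ} (hK : IsCompact K)
    (h : ∀ μ ∈ K, μ.re < 0) : ∃ ε > 0, ∀ μ ∈ K, μ.re < -ε := by
  rcases K.eq_empty_or_nonempty with rfl | hne
  · exact ⟨1, one_pos, by simp⟩
  obtain ⟨μ₀, hμ₀, hmax⟩ := hK.exists_isMaxOn hne Complex.continuous_re.continuousOn
  refine ⟨-μ₀.re / 2, by linarith [h μ₀ hμ₀], fun μ hμ => ?_⟩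
  linarith [h μ₀ hμ₀, show μ.re ≤ μ₀.re from hmax hμ]

section LyapunovFlow

variable {ι : Type*} [Fintype ι] [DecidableEq ι]

def lyapunovFlow (M B : Matrix ι ι ℝ) (t : ℝ) : Matrix ι ι ℝ :=
  exp (t • M) * B * exp (t • Mᵀ)

theorem lyapunovFlow_at_zero (M B : Matrix ι ι ℝ) : lyapunovFlow M B 0 = B := by
  simp [lyapunovFlow]

theorem lyapunovFlow_zero (M : Matrix ι ι ℝ) (t : ℝ) : lyapunovFlow M 0 t = 0 := by
  simp [lyapunovFlow]

theorem mul_lyapunovFlow_add_lyapunovFlow_mul (M B : Matrix ι ι ℝ) (t : ℝ) :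
    M * lyapunovFlow M B t + lyapunovFlow M B t * Mᵀ = lyapunovFlow M (M * B + B * Mᵀ) t := by
  have hM : Commute M (exp (t • M)) := ((Commute.refl M).smul_right t).exp_right
  have hMT : Commute Mᵀ (exp (t • Mᵀ)) := ((Commute.refl Mᵀ).smul_right t).exp_right
  simp only [lyapunovFlow, mul_add, add_mul, ← mul_assoc, hM.eq]
  simp only [mul_assoc, hMT.eq]

theorem posSemidef_lyapunovFlow {B : Matrix ι ι ℝ} (hB : B.PosSemidef) (M : Matrix ι ι ℝ)
    (t : ℝ) : (lyapunovFlow M B t).PosSemidef := by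
  rw [lyapunovFlow, ← transpose_smul, exp_transpose, ← conjTranspose_eq_transpose_of_trivial]
  exact hB.mul_mul_conjTranspose_same _

def lyapunovIntegral (M W : Matrix ι ι ℝ) : Matrix ι ι ℝ :=
  of fun i j => ∫ t in Set.Ici 0, lyapunovFlow M W t i j

end LyapunovFlow

section EntrywiseIntegral

variable {α m n : Type*} [MeasurableSpace α] {μ : Measure α} [Fintype m] [Fintype n]
  [DecidableEq m] [DecidableEq n] {f : α → Matrix m n ℝ}

theorem LinearMap.integral_comp_matrix (L : Matrix m n ℝ →ₗ[ℝ] ℝ)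
    (hf : ∀ i j, Integrable (fun x => f x i j) μ) :
    ∫ x, L (f x) ∂μ = L (of fun i j => ∫ x, f x i j ∂μ) := by
  have hL : ∀ A : Matrix m n ℝ, L A = ∑ i, ∑ j, A i j * L (Matrix.single i j 1) := fun A => by
    conv_lhs => rw [matrix_eq_sum_single A]
    simp only [map_sum]
    refine sum_congr rfl fun i _ => sum_congr rfl fun j _ => ?_
    rw [← smul_eq_mul, ← map_smul, smul_single, smul_eq_mul, mul_one]
  rw [hL (of _), integral_congr_ae (ae_of_all _ fun x => hL (f x)),
    integral_finsetSum _ fun i _ => integrable_finsetSum _ fun j _ => (hf i j).mul_const _]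
  refine sum_congr rfl fun i _ => ?_
  rw [integral_finsetSum _ fun j _ => (hf i j).mul_const _]
  exact sum_congr rfl fun j _ => integral_mul_const _ _

theorem posSemidef_entrywise_integral {f : α → Matrix n n ℝ}
    (hf : ∀ i j, Integrable (fun x => f x i j) μ) (hpos : ∀ x, (f x).PosSemidef) :
    (of fun i j => ∫ x, f x i j ∂μ).PosSemidef := by
  refine .of_dotProduct_mulVec_nonneg ?_ fun v => ?_
  · ext i j
    simp only [conjTranspose_apply, star_trivial, of_apply]
    refine integral_congr_ae (ae_of_all _ fun x => ?_)
    simpa using congr_fun₂ (hpos x).1 i j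
  · let q : Matrix n n ℝ →ₗ[ℝ] ℝ :=
      { toFun := fun B => star v ⬝ᵥ (B *ᵥ v)
        map_add' := fun B C => by rw [add_mulVec, dotProduct_add]
        map_smul' := fun c B => by rw [smul_mulVec, dotProduct_smul]; rfl }
    exact (integral_nonneg fun x => (hpos x).dotProduct_mulVec_nonneg v).trans_eq
      (q.integral_comp_matrix hf)

end EntrywiseIntegral

section Frobenius

-- The Frobenius norm is submultiplicative and invariant under transposition and under `ℝ → ℂ`.
open scoped Matrix.Norms.Frobenius

theorem HasDerivAt.matrix_apply {m n : Type*} [Fintype m] [Fintype n] {f : ℝ → Matrix m n ℝ}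
    {f' : Matrix m n ℝ} {t : ℝ} (h : HasDerivAt f f' t) (i : m) (j : n) :
    HasDerivAt (fun s => f s i j) (f' i j) t :=
  (entryLinearMap ℝ ℝ i j).toContinuousLinearMap.hasFDerivAt.comp_hasDerivAt t h

theorem Asymptotics.IsBigO.matrix_apply {α m n : Type*} [Fintype m] [Fintype n] {l : Filter α}
    {f : α → Matrix m n ℝ} {g : α → ℝ} (h : f =O[l] g) (i : m) (j : n) :
    (fun x => f x i j) =O[l] g :=
  ((entryLinearMap ℝ ℝ i j).toContinuousLinearMap.isBigO_comp f l).trans h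

theorem Matrix.map_ofReal_exp_smul {m : Type*} [Fintype m] [DecidableEq m] (M : Matrix m m ℝ)
    (t : ℝ) : (exp (t • M)).map Complex.ofReal = exp ((t : ℂ) • M.map Complex.ofReal) := by
  have hsmul : (t • M).map Complex.ofReal = (t : ℂ) • M.map Complex.ofReal := by ext; simp
  rw [← hsmul]
  exact map_exp (Complex.ofRealHom.mapMatrix (m := m))
    (continuous_id.matrix_map Complex.continuous_ofReal) (t • M)

theorem hasDerivAt_lyapunovFlow {ι : Type*} [Fintype ι] [DecidableEq ι] (M B : Matrix ι ι ℝ)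
    (t : ℝ) :
    HasDerivAt (lyapunovFlow M B) (M * lyapunovFlow M B t + lyapunovFlow M B t * Mᵀ) t :=
  hasDerivAt_exp_smul_mul_mul_exp_smul M B Mᵀ t

variable {n : ℕ} {M : Matrix (Fin n) (Fin n) ℝ}

theorem IsHurwitz.exists_isBigO_exp_smul (hM : IsHurwitz M) :
    ∃ ε > 0, (fun t : ℝ => exp (t • M)) =O[atTop] fun t => Real.exp (-ε * t) := by
  obtain ⟨ε, hε, hspec⟩ :=
    (spectrum.isCompact (𝕜 := ℂ) (M.map Complex.ofReal)).exists_pos_forall_re_lt_neg hM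
  refine ⟨ε, hε, isBigO_norm_left.mp ?_⟩
  refine (isBigO_norm_left.mpr (isBigO_exp_smul_of_forall_re_lt hspec)).congr_left fun t => ?_
  exact (congrArg norm (map_ofReal_exp_smul M t)).symm.trans
    (frobenius_norm_map_eq _ _ Complex.norm_real)

theorem IsHurwitz.exists_isBigO_lyapunovFlow (hM : IsHurwitz M) (B : Matrix (Fin n) (Fin n) ℝ) :
    ∃ ε > 0, lyapunovFlow M B =O[atTop] fun t => Real.exp (-ε * t) := by
  obtain ⟨ε, hε, hE⟩ := hM.exists_isBigO_exp_smul
  have hET : (fun t : ℝ => exp (t • Mᵀ)) =O[atTop] fun t => Real.exp (-ε * t) := by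
    refine isBigO_norm_left.mp ((isBigO_norm_left.mpr hE).congr_left fun t => ?_)
    rw [← transpose_smul, exp_transpose, frobenius_norm_transpose]
  refine ⟨2 * ε, by positivity, ?_⟩
  refine ((hE.mul (isBigO_const_const B one_ne_zero atTop)).mul hET).congr_right fun t => ?_
  rw [mul_one, ← Real.exp_add]
  ring_nf

theorem IsHurwitz.integrableOn_lyapunovFlow_apply (hM : IsHurwitz M)
    (B : Matrix (Fin n) (Fin n) ℝ) (i j : Fin n) :
    IntegrableOn (fun t => lyapunovFlow M B t i j) (Set.Ici 0) := by
  obtain ⟨ε, hε, hB⟩ := hM.exists_isBigO_lyapunovFlow B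
  have hcont : Continuous fun t => lyapunovFlow M B t i j := continuous_iff_continuousAt.mpr
    fun t => ((hasDerivAt_lyapunovFlow M B t).matrix_apply i j).continuousAt
  exact (hcont.continuousOn.locallyIntegrableOn measurableSet_Ici).integrableOn_of_isBigO_atTop
    (hB.matrix_apply i j) ⟨Set.Ioi 0, Ioi_mem_atTop 0, exp_neg_integrableOn_Ioi 0 hε⟩

theorem IsHurwitz.tendsto_lyapunovFlow_apply (hM : IsHurwitz M) (B : Matrix (Fin n) (Fin n) ℝ)
    (i j : Fin n) : Tendsto (fun t => lyapunovFlow M B t i j) atTop (𝓝 0) := by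
  obtain ⟨ε, hε, hB⟩ := hM.exists_isBigO_lyapunovFlow B
  exact (hB.matrix_apply i j).trans_tendsto (Real.tendsto_exp_atBot.comp
    (tendsto_id.const_mul_atTop_of_neg (neg_lt_zero.mpr hε)))

theorem IsHurwitz.integral_lyapunovFlow_mul_add_mul_transpose_apply (hM : IsHurwitz M)
    (B : Matrix (Fin n) (Fin n) ℝ) (i j : Fin n) :
    ∫ t in Set.Ioi 0, lyapunovFlow M (M * B + B * Mᵀ) t i j = -B i j := by
  have h := integral_Ioi_of_hasDerivAt_of_tendsto'
    (fun t _ => ((hasDerivAt_lyapunovFlow M B t).congr_deriv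
      (mul_lyapunovFlow_add_lyapunovFlow_mul M B t)).matrix_apply i j)
    ((hM.integrableOn_lyapunovFlow_apply _ i j).mono_set Set.Ioi_subset_Ici_self)
    (hM.tendsto_lyapunovFlow_apply B i j)
  rwa [lyapunovFlow_at_zero, zero_sub] at h

end Frobenius

section Hurwitz

variable {n : ℕ} {M : Matrix (Fin n) (Fin n) ℝ}

theorem IsHurwitz.lyapunov_injective (hM : IsHurwitz M) :
    Function.Injective fun X : Matrix (Fin n) (Fin n) ℝ => M * X + X * Mᵀ := by
  intro X Y hXY
  have hD : M * (X - Y) + (X - Y) * Mᵀ = 0 := by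
    rw [mul_sub, sub_mul, sub_add_sub_comm, sub_eq_zero]
    exact hXY
  ext i j
  have h := hM.integral_lyapunovFlow_mul_add_mul_transpose_apply (X - Y) i j
  simp only [hD, lyapunovFlow_zero, Matrix.zero_apply, integral_zero, Matrix.sub_apply] at h
  linarith

theorem IsHurwitz.lyapunovEquation_lyapunovIntegral (hM : IsHurwitz M)
    (W : Matrix (Fin n) (Fin n) ℝ) :
    M * lyapunovIntegral M W + lyapunovIntegral M W * Mᵀ + W = 0 := by
  ext i j
  have hL : ∫ t in Set.Ici 0, (M * lyapunovFlow M W t + lyapunovFlow M W t * Mᵀ) i j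
      = (M * lyapunovIntegral M W + lyapunovIntegral M W * Mᵀ) i j :=
    (entryLinearMap ℝ ℝ i j ∘ₗ (LinearMap.mulLeft ℝ M + LinearMap.mulRight ℝ Mᵀ)
      ).integral_comp_matrix (hM.integrableOn_lyapunovFlow_apply W)
  simp_rw [mul_lyapunovFlow_add_lyapunovFlow_mul, integral_Ici_eq_integral_Ioi,
    hM.integral_lyapunovFlow_mul_add_mul_transpose_apply] at hL
  rw [Matrix.add_apply, ← hL, Matrix.zero_apply, neg_add_cancel]

theorem IsHurwitz.posSemidef_lyapunovIntegral (hM : IsHurwitz M) {W : Matrix (Fin n) (Fin n) ℝ}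
    (hW : W.PosSemidef) : (lyapunovIntegral M W).PosSemidef :=
  posSemidef_entrywise_integral (hM.integrableOn_lyapunovFlow_apply W) fun t =>
    posSemidef_lyapunovFlow hW M t

end Hurwitz

theorem stmt_9_general {n : ℕ}
    (M W S : Matrix (Fin n) (Fin n) ℝ)
    (hM : IsHurwitz M) (hW : W.PosSemidef) :
    ∃ X : Matrix (Fin n) (Fin n) ℝ,
      (∀ i j : Fin n,
        IntegrableOn
          (fun t : ℝ =>
            (NormedSpace.exp (t • M) * W * NormedSpace.exp (t • Mᵀ)) i j)
          (Set.Ici (0 : ℝ))) ∧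
      (∀ i j : Fin n,
        X i j = ∫ t in Set.Ici (0 : ℝ),
          (NormedSpace.exp (t • M) * W * NormedSpace.exp (t • Mᵀ)) i j) ∧
      X.PosSemidef ∧
      M * X + X * Mᵀ + W = 0 ∧
      (∀ X' : Matrix (Fin n) (Fin n) ℝ, M * X' + X' * Mᵀ + W = 0 → X' = X) ∧
      ∫ t in Set.Ici (0 : ℝ),
          Matrix.trace (S * (NormedSpace.exp (t • M) * W * NormedSpace.exp (t • Mᵀ)))
        = Matrix.trace (S * X) := by
  have hX := hM.lyapunovEquation_lyapunovIntegral W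
  refine ⟨lyapunovIntegral M W, hM.integrableOn_lyapunovFlow_apply W, fun i j => rfl,
    hM.posSemidef_lyapunovIntegral hW, hX, fun X' hX' => hM.lyapunov_injective ?_,
    (traceLinearMap _ ℝ ℝ ∘ₗ LinearMap.mulLeft ℝ S).integral_comp_matrix
      (hM.integrableOn_lyapunovFlow_apply W)⟩
  exact (eq_neg_of_add_eq_zero_left hX').trans (eq_neg_of_add_eq_zero_left hX).symm

/-- Integral representation of the solution of the continuous-time Lyapunov equation. -/
theorem stmt_9 {n : ℕ}
    (M W S : Matrix (Fin n) (Fin n) ℝ)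
    (hM : IsHurwitz M) (hW : W.PosSemidef) (hS : S.IsHermitian) :
    ∃ X : Matrix (Fin n) (Fin n) ℝ,
      (∀ i j : Fin n,
        IntegrableOn
          (fun t : ℝ =>
            (NormedSpace.exp (t • M) * W * NormedSpace.exp (t • Mᵀ)) i j)
          (Set.Ici (0 : ℝ))) ∧
      (∀ i j : Fin n,
        X i j = ∫ t in Set.Ici (0 : ℝ),
          (NormedSpace.exp (t • M) * W * NormedSpace.exp (t • Mᵀ)) i j) ∧
      X.PosSemidef ∧
      M * X + X * Mᵀ + W = 0 ∧
      (∀ X' : Matrix (Fin n) (Fin n) ℝ, M * X' + X' * Mᵀ + W = 0 → X' = X) ∧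
      ∫ t in Set.Ici (0 : ℝ),
          Matrix.trace (S * (NormedSpace.exp (t • M) * W * NormedSpace.exp (t • Mᵀ)))
        = Matrix.trace (S * X) :=
  stmt_9_general M W S hM hW
end
end

section
/- Let A ∈ ℝ^{n×n}, B ∈ ℝ^{n×m}, Q ∈ ℝ^{n×n} symmetric, R ∈ ℝ^{m×m} symmetric positive definite, and W ∈ ℝ^{n×n} symmetric. Let K ∈ ℝ^{m×n}, let X ∈ ℝ^{n×n} be symmetric positive definite and satisfy (A+BK)X + X(A+BK)ᵀ + W = 0, and let P ∈ ℝ^{n×n} be symmetric and satisfy (A+BK)ᵀP + P(A+BK) + Q + KᵀRK = 0. If the stationarity condition (RK + BᵀP)X = 0 holds, then K = −R⁻¹BᵀP and P satisfies the continuous-time algebraic Riccati equation AᵀP + PA + Q − PBR⁻¹BᵀP = 0. -/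
open Matrix

noncomputable section

/-- Stationary points of the continuous-time LQR cost (with positive-definite Lyapunov
variable) are given by the Riccati solution. -/
theorem stmt_12 {n m : ℕ}
    (A : Matrix (Fin n) (Fin n) ℝ) (B : Matrix (Fin n) (Fin m) ℝ)
    (Q W X P : Matrix (Fin n) (Fin n) ℝ)
    (R : Matrix (Fin m) (Fin m) ℝ)
    (K : Matrix (Fin m) (Fin n) ℝ)
    (hQ : Q.IsHermitian) (hR : R.PosDef) (hW : W.IsHermitian)
    (hX : X.PosDef)
    (hXEq : (A + B * K) * X + X * (A + B * K)ᵀ + W = 0)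
    (hP : P.IsHermitian)
    (hPEq : (A + B * K)ᵀ * P + P * (A + B * K) + Q + Kᵀ * R * K = 0)
    (hStat : (R * K + Bᵀ * P) * X = 0) :
    K = -(R⁻¹ * Bᵀ * P) ∧
      Aᵀ * P + P * A + Q - P * B * R⁻¹ * Bᵀ * P = 0 := by
  have hXinv : IsUnit X.det := isUnit_iff_ne_zero.mpr hX.det_pos.ne'
  have hRinv : IsUnit R.det := isUnit_iff_ne_zero.mpr hR.det_pos.ne'
  have hM : R * K + Bᵀ * P = 0 := by
    have := congrArg (· * X⁻¹) hStat
    simpa [Matrix.mul_assoc, Matrix.mul_nonsing_inv _ hXinv] using this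
  have hRK : R * K = -(Bᵀ * P) := by
    have := congrArg (· + -(Bᵀ * P)) hM
    simpa [add_assoc] using this
  have hK : K = -(R⁻¹ * Bᵀ * P) := by
    have := congrArg (R⁻¹ * ·) hRK
    simpa [← Matrix.mul_assoc, Matrix.nonsing_inv_mul _ hRinv, Matrix.mul_neg] using this
  have hRT : Rᵀ = R := by simpa using hR.1.eq
  have hPT : Pᵀ = P := by simpa using hP.eq
  have hRiT : R⁻¹ᵀ = R⁻¹ := by rw [Matrix.transpose_nonsing_inv, hRT]
  refine ⟨hK, ?_⟩
  rw [hK] at hPEq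
  simp only [Matrix.transpose_add, Matrix.transpose_neg, Matrix.transpose_mul,
    Matrix.transpose_transpose, hRiT, hPT, Matrix.neg_mul, Matrix.mul_neg, neg_neg,
    Matrix.mul_assoc, Matrix.add_mul, Matrix.mul_add,
    Matrix.mul_nonsing_inv_cancel_left _ _ hRinv,
    Matrix.nonsing_inv_mul_cancel_left _ _ hRinv] at hPEq
  rw [sub_eq_add_neg]
  simp only [Matrix.mul_assoc]
  rw [← hPEq]
  abel
end
end

section
/- Let A ∈ ℝ^{n×n}, B ∈ ℝ^{n×m}, Q ∈ ℝ^{n×n} symmetric positive semidefinite, R ∈ ℝ^{m×m} symmetric positive definite, and W ∈ ℝ^{n×n} symmetric. Let K ∈ ℝ^{m×n}, let X ∈ ℝ^{n×n} be symmetric positive definite and satisfy (A+BK)X(A+BK)ᵀ − X + W = 0, and let P ∈ ℝ^{n×n} be symmetric positive semidefinite and satisfy (A+BK)ᵀP(A+BK) − P + Q + KᵀRK = 0. If the stationarity condition ((R+BᵀPB)K + BᵀPA)X = 0 holds, then R + BᵀPB is invertible, K = −(R+BᵀPB)⁻¹BᵀPA, and P satisfies the discrete-time algebraic Riccati equation P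 = AᵀPA + Q − AᵀPB(R+BᵀPB)⁻¹BᵀPA. -/
open Matrix

/-
Since `X` is invertible it cancels from the stationarity condition, leaving
`(R + BᵀPB) K + BᵀPA = 0`; as `R + BᵀPB` is positive definite, this determines `K`. In the
closed-loop Lyapunov equation for `P` the terms involving `K` add up to
`Kᵀ((R + BᵀPB) K + BᵀPA) + AᵀPBK`: the first summand vanishes by stationarity, and substituting
the gain into the second gives the Riccati equation.
-/

namespace Matrix

variable {l m n α : Type*} [Fintype m] [Fintype n] [CommRing α]

theorem eq_zero_of_mul_eq_zero_of_isUnit_det [DecidableEq n] {M : Matrix l n α}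
    {X : Matrix n n α} (hX : IsUnit X.det) (h : M * X = 0) : M = 0 := by
  rw [← mul_nonsing_inv_cancel_right X M hX, h, Matrix.zero_mul]

theorem eq_neg_inv_mul_of_mul_add_eq_zero [DecidableEq n] {S : Matrix n n α}
    {K N : Matrix n l α} (hS : IsUnit S.det) (h : S * K + N = 0) : K = -(S⁻¹ * N) := by
  rw [← nonsing_inv_mul_cancel_left S K hS, eq_neg_of_add_eq_zero_left h, Matrix.mul_neg]

theorem PosDef.add_transpose_mul_mul {R : Matrix m m ℝ} {P : Matrix n n ℝ} (hR : R.PosDef)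
    (hP : P.PosSemidef) (B : Matrix n m ℝ) : (R + Bᵀ * P * B).PosDef := by
  simpa only [conjTranspose_eq_transpose_of_trivial] using
    hR.add_posSemidef (hP.conjTranspose_mul_mul_same B)

theorem closedLoop_transpose_mul_mul_add (A P : Matrix n n α) (B : Matrix n m α)
    (R : Matrix m m α) (K : Matrix m n α) :
    (A + B * K)ᵀ * P * (A + B * K) + Kᵀ * R * K
      = Aᵀ * P * A + Aᵀ * P * B * K + Kᵀ * ((R + Bᵀ * P * B) * K + Bᵀ * P * A) := by
  simp only [transpose_add, transpose_mul, Matrix.add_mul, Matrix.mul_add, Matrix.mul_assoc]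
  abel

theorem riccati_of_lyapunov_of_stationary [DecidableEq m] {A P Q : Matrix n n α}
    {B : Matrix n m α} {R : Matrix m m α} {K : Matrix m n α}
    (hPEq : (A + B * K)ᵀ * P * (A + B * K) - P + Q + Kᵀ * R * K = 0)
    (hStat : (R + Bᵀ * P * B) * K + Bᵀ * P * A = 0)
    (hK : K = -((R + Bᵀ * P * B)⁻¹ * Bᵀ * P * A)) :
    P = Aᵀ * P * A + Q - Aᵀ * P * B * (R + Bᵀ * P * B)⁻¹ * Bᵀ * P * A := by
  have h := closedLoop_transpose_mul_mul_add A P B R K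
  rw [hStat, Matrix.mul_zero, add_zero] at h
  calc P = Aᵀ * P * A + Q + Aᵀ * P * B * K := by linear_combination (norm := abel) -hPEq + h
    _ = _ := by simp only [hK, Matrix.mul_neg, Matrix.mul_assoc, sub_eq_add_neg]

end Matrix

theorem stmt_13_general {n m : ℕ}
    (A : Matrix (Fin n) (Fin n) ℝ) (B : Matrix (Fin n) (Fin m) ℝ)
    (Q X P : Matrix (Fin n) (Fin n) ℝ)
    (R : Matrix (Fin m) (Fin m) ℝ)
    (K : Matrix (Fin m) (Fin n) ℝ)
    (hR : R.PosDef)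
    (hX : X.PosDef)
    (hP : P.PosSemidef)
    (hPEq : (A + B * K)ᵀ * P * (A + B * K) - P + Q + Kᵀ * R * K = 0)
    (hStat : ((R + Bᵀ * P * B) * K + Bᵀ * P * A) * X = 0) :
    IsUnit (R + Bᵀ * P * B) ∧
      K = -((R + Bᵀ * P * B)⁻¹ * Bᵀ * P * A) ∧
      P = Aᵀ * P * A + Q - Aᵀ * P * B * (R + Bᵀ * P * B)⁻¹ * Bᵀ * P * A := by
  have hS : IsUnit (R + Bᵀ * P * B) := (hR.add_transpose_mul_mul hP B).isUnit
  have hStat' : (R + Bᵀ * P * B) * K + Bᵀ * P * A = 0 :=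
    eq_zero_of_mul_eq_zero_of_isUnit_det ((isUnit_iff_isUnit_det X).mp hX.isUnit) hStat
  have hK : K = -((R + Bᵀ * P * B)⁻¹ * Bᵀ * P * A) := by
    simpa only [Matrix.mul_assoc] using
      eq_neg_inv_mul_of_mul_add_eq_zero ((isUnit_iff_isUnit_det _).mp hS) hStat'
  exact ⟨hS, hK, riccati_of_lyapunov_of_stationary hPEq hStat' hK⟩

/-- Stationary points of the discrete-time LQR cost (with positive-definite Lyapunov
variable) are given by the Riccati solution. -/
theorem stmt_13 {n m : ℕ}
    (A : Matrix (Fin n) (Fin n) ℝ) (B : Matrix (Fin n) (Fin m) ℝ)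
    (Q W X P : Matrix (Fin n) (Fin n) ℝ)
    (R : Matrix (Fin m) (Fin m) ℝ)
    (K : Matrix (Fin m) (Fin n) ℝ)
    (hQ : Q.PosSemidef) (hR : R.PosDef) (hW : W.IsHermitian)
    (hX : X.PosDef)
    (hXEq : (A + B * K) * X * (A + B * K)ᵀ - X + W = 0)
    (hP : P.PosSemidef)
    (hPEq : (A + B * K)ᵀ * P * (A + B * K) - P + Q + Kᵀ * R * K = 0)
    (hStat : ((R + Bᵀ * P * B) * K + Bᵀ * P * A) * X = 0) :
    IsUnit (R + Bᵀ * P * B) ∧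
      K = -((R + Bᵀ * P * B)⁻¹ * Bᵀ * P * A) ∧
      P = Aᵀ * P * A + Q - Aᵀ * P * B * (R + Bᵀ * P * B)⁻¹ * Bᵀ * P * A :=
  stmt_13_general A B Q X P R K hR hX hP hPEq hStat
end

section
/- Let M ∈ ℝ^{n×n} be Hurwitz stable and W ∈ ℝ^{n×n} symmetric. Let X ∈ ℝ^{n×n} be symmetric and satisfy the Lyapunov inequality M X + X Mᵀ + W ⪯ 0 (i.e., −(MX + XMᵀ + W) is positive semidefinite), and let X₀ ∈ ℝ^{n×n} be symmetric and satisfy the Lyapunov equation M X₀ + X₀ Mᵀ + W = 0. Then X ⪰ X₀. -/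
open Matrix

noncomputable section

/-!
Put `Δ = X - X₀`. Subtracting the Lyapunov equation from the inequality gives
`M Δ + Δ Mᵀ = -Q` with `Q ⪰ 0`. For each vector `v`, the function
`q t = vᵀ e^{tM} Δ e^{tMᵀ} v` has derivative `-vᵀ e^{tM} Q e^{tMᵀ} v ≤ 0`, so it is antitone,
and it tends to `0` because `e^{tM} → 0`; hence `vᵀ Δ v = q 0 ≥ 0`.

The decay of `e^{tM}` is read off the generalized eigenspaces of the complexification of `M`:
on the one for the eigenvalue `μ`, `e^{tM}` acts as `e^{tμ}` times a polynomial in `t`,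
and `Re μ < 0`.
-/

open Filter Topology NormedSpace

theorem Complex.tendsto_exp_mul_mul_pow_atTop_nhds_zero {μ : ℂ} (hμ : μ.re < 0) (j : ℕ) :
    Tendsto (fun t : ℝ => Complex.exp (t * μ) * (t : ℂ) ^ j) atTop (𝓝 0) := by
  rw [tendsto_zero_iff_norm_tendsto_zero]
  have hreal : Tendsto (fun t : ℝ => t ^ j * Real.exp (μ.re * t)) atTop (𝓝 0) := by
    simpa using tendsto_rpow_mul_exp_neg_mul_atTop_nhds_zero j (-μ.re) (by linarith)
  refine hreal.congr' ?_
  filter_upwards [eventually_ge_atTop 0] with t ht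
  simp [Complex.norm_exp, abs_of_nonneg ht, mul_comm]

theorem Module.End.mem_spectrum_of_mem_maxGenEigenspace {R M : Type*} [CommRing R]
    [AddCommGroup M] [Module R M] {f : Module.End R M} {μ : R} {w : M}
    (hw : w ∈ f.maxGenEigenspace μ) (hw0 : w ≠ 0) : μ ∈ spectrum R f := by
  have : f.HasUnifEigenvalue μ ⊤ := fun h => hw0 <| (Submodule.mem_bot R).mp (h ▸ hw)
  exact ((hasUnifEigenvalue_iff_hasUnifEigenvalue_one (by simp)).mp this).mem_spectrum

section
variable {ι : Type*} [Fintype ι] [DecidableEq ι]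
attribute [local instance] Matrix.linftyOpNormedAddCommGroup Matrix.linftyOpNormedRing
  Matrix.linftyOpNormedAlgebra

theorem Matrix.exp_smul_mulVec_eq_sum_of_pow_mulVec_eq_zero {𝕂 : Type*} [RCLike 𝕂] {N : Matrix ι ι 𝕂}
    {w : ι → 𝕂} {k : ℕ} (hk : N ^ k *ᵥ w = 0) (t : 𝕂) :
    exp (t • N) *ᵥ w = ∑ j ∈ Finset.range k, (t ^ j / j.factorial) • (N ^ j *ᵥ w) := by
  have hsum : HasSum (fun j => ((j.factorial : 𝕂)⁻¹ • (t • N) ^ j) *ᵥ w) (exp (t • N) *ᵥ w) :=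
    (exp_series_hasSum_exp' (t • N)).map (mulVec.addMonoidHomLeft w)
      (continuous_id.matrix_mulVec continuous_const)
  refine hsum.unique (hasSum_sum_of_ne_finset_zero fun j hj => ?_) |>.trans
    (Finset.sum_congr rfl fun j _ => ?_)
  · obtain ⟨i, rfl⟩ := Nat.exists_eq_add_of_le (not_lt.mp (Finset.mem_range.not.mp hj))
    rw [smul_pow, smul_mulVec, smul_mulVec, add_comm, pow_add N, ← mulVec_mulVec, hk]
    simp
  · rw [smul_pow, smul_mulVec, smul_mulVec, smul_smul, div_eq_inv_mul]

theorem Matrix.exp_smul_mulVec_eq_of_pow_sub_smul_mulVec_eq_zero {A : Matrix ι ι ℂ} {μ : ℂ}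
    {w : ι → ℂ} {k : ℕ} (hk : (A - μ • 1) ^ k *ᵥ w = 0) (t : ℂ) :
    exp (t • A) *ᵥ w = Complex.exp (t * μ) •
      ∑ j ∈ Finset.range k, (t ^ j / j.factorial) • ((A - μ • 1) ^ j *ᵥ w) := by
  have hsplit : t • A = algebraMap ℂ _ (t * μ) + t • (A - μ • 1) := by
    rw [Algebra.algebraMap_eq_smul_one, smul_sub, smul_smul]
    abel
  have hscalar : exp (algebraMap ℂ (Matrix ι ι ℂ) (t * μ)) = algebraMap ℂ _ (exp (t * μ)) :=
    (algebraMap_exp_comm _).symm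
  rw [hsplit, Matrix.exp_add_of_commute _ _ (Algebra.commute_algebraMap_left _ _), hscalar,
    Algebra.algebraMap_eq_smul_one, smul_mul_assoc, one_mul, smul_mulVec,
    exp_smul_mulVec_eq_sum_of_pow_mulVec_eq_zero hk, Complex.exp_eq_exp_ℂ]

theorem Matrix.tendsto_exp_smul_mulVec_atTop_nhds_zero (A : Matrix ι ι ℂ)
    (hA : ∀ μ ∈ spectrum ℂ A, μ.re < 0) (v : ι → ℂ) :
    Tendsto (fun t : ℝ => exp ((t : ℂ) • A) *ᵥ v) atTop (𝓝 0) := by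
  have hv : v ∈ ⨆ μ, Module.End.maxGenEigenspace A.toLin' μ := by
    rw [Module.End.iSup_maxGenEigenspace_eq_top]; trivial
  refine Submodule.iSup_induction
    (motive := fun v => Tendsto (fun t : ℝ => exp ((t : ℂ) • A) *ᵥ v) atTop (𝓝 0))
    _ hv (fun μ w hw => ?_) (by simp) fun x y hx hy => by simpa [mulVec_add] using hx.add hy
  obtain rfl | hw0 := eq_or_ne w 0
  · simp
  have hμ := hA μ (spectrum_toLin' A ▸ Module.End.mem_spectrum_of_mem_maxGenEigenspace hw hw0)
  obtain ⟨k, hk⟩ := (Module.End.mem_maxGenEigenspace _ _ _).mp hw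
  have hk' : (A - μ • 1) ^ k *ᵥ w = 0 := by
    simpa [← Matrix.toLin'_apply, Matrix.toLin'_pow, Module.End.one_eq_id] using hk
  have hdecay : Tendsto (fun t : ℝ => ∑ j ∈ Finset.range k, (Complex.exp (t * μ) * (t : ℂ) ^ j) •
      ((j.factorial : ℂ)⁻¹ • ((A - μ • 1) ^ j *ᵥ w))) atTop (𝓝 0) := by
    simpa using tendsto_finsetSum (Finset.range k) fun j _ =>
      (Complex.tendsto_exp_mul_mul_pow_atTop_nhds_zero hμ j).smul_const
        ((j.factorial : ℂ)⁻¹ • ((A - μ • 1) ^ j *ᵥ w))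
  refine hdecay.congr fun t => ?_
  rw [exp_smul_mulVec_eq_of_pow_sub_smul_mulVec_eq_zero hk', Finset.smul_sum]
  refine Finset.sum_congr rfl fun j _ => ?_
  rw [smul_smul, smul_smul, div_eq_mul_inv, mul_assoc]

theorem Matrix.tendsto_exp_smul_atTop_nhds_zero (A : Matrix ι ι ℂ)
    (hA : ∀ μ ∈ spectrum ℂ A, μ.re < 0) :
    Tendsto (fun t : ℝ => exp ((t : ℂ) • A)) atTop (𝓝 0) :=
  tendsto_pi_nhds.2 fun i => tendsto_pi_nhds.2 fun j => by
    simpa [mulVec_single_one] using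
      tendsto_pi_nhds.1 (tendsto_exp_smul_mulVec_atTop_nhds_zero A hA (Pi.single j 1)) i

theorem Matrix.tendsto_exp_smul_atTop_nhds_zero_of_map_ofReal (M : Matrix ι ι ℝ)
    (hM : ∀ μ ∈ spectrum ℂ (M.map Complex.ofReal), μ.re < 0) :
    Tendsto (fun t : ℝ => exp (t • M)) atTop (𝓝 0) := by
  have hcomplex (t : ℝ) :
      (exp (t • M)).map Complex.ofReal = exp ((t : ℂ) • M.map Complex.ofReal) := by
    have hsmul : (t • M).map Complex.ofReal = (t : ℂ) • M.map Complex.ofReal := by ext; simp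
    rw [← hsmul]
    exact map_exp Complex.ofRealHom.mapMatrix
      (continuous_id.matrix_map Complex.continuous_ofReal) (t • M)
  have hre : Tendsto (fun t : ℝ => (exp ((t : ℂ) • M.map Complex.ofReal)).map Complex.re)
      atTop (𝓝 0) := by
    have := ((continuous_id.matrix_map Complex.continuous_re).tendsto 0).comp
      (tendsto_exp_smul_atTop_nhds_zero _ hM)
    rwa [id, Matrix.map_zero _ Complex.zero_re] at this
  refine hre.congr fun t => ?_
  rw [← hcomplex, Matrix.map_map]
  ext
  simp

theorem Matrix.hasDerivAt_exp_smul_mul_mul_exp_smul_transpose (M Δ : Matrix ι ι ℝ) (t : ℝ) :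
    HasDerivAt (fun s : ℝ => exp (s • M) * Δ * exp (s • Mᵀ))
      (exp (t • M) * (M * Δ + Δ * Mᵀ) * exp (t • Mᵀ)) t := by
  refine (((hasDerivAt_exp_smul_const M t).mul_const Δ).fun_mul
    (hasDerivAt_exp_smul_const' Mᵀ t)).congr_deriv ?_
  noncomm_ring

theorem HasDerivAt.dotProduct_mulVec {F : ℝ → Matrix ι ι ℝ} {F' : Matrix ι ι ℝ} {t : ℝ}
    (hF : HasDerivAt F F' t) (v w : ι → ℝ) :
    HasDerivAt (fun s => v ⬝ᵥ F s *ᵥ w) (v ⬝ᵥ F' *ᵥ w) t := by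
  let bilin : Matrix ι ι ℝ →L[ℝ] ℝ := LinearMap.toContinuousLinearMap
    (LinearMap.applyₗ w ∘ₗ LinearMap.applyₗ v ∘ₗ (Matrix.toLinearMap₂' ℝ).toLinearMap)
  have hbilin (B : Matrix ι ι ℝ) : bilin B = v ⬝ᵥ B *ᵥ w := toLinearMap₂'_apply' _ _ _
  simpa only [Function.comp_def, hbilin] using
    (bilin.hasFDerivAt.comp_hasDerivAt t hF).congr_deriv (hbilin F')

theorem Matrix.PosSemidef.of_neg_lyapunov_posSemidef {M Δ : Matrix ι ι ℝ}
    (hM : ∀ μ ∈ spectrum ℂ (M.map Complex.ofReal), μ.re < 0) (hΔ : Δ.IsHermitian)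
    (hL : (-(M * Δ + Δ * Mᵀ)).PosSemidef) : Δ.PosSemidef := by
  refine PosSemidef.of_dotProduct_mulVec_nonneg hΔ fun v => ?_
  let q (t : ℝ) : ℝ := v ⬝ᵥ (exp (t • M) * Δ * exp (t • Mᵀ)) *ᵥ v
  have hanti : Antitone q := by
    refine antitone_of_hasDerivAt_nonpos (fun t =>
      (hasDerivAt_exp_smul_mul_mul_exp_smul_transpose M Δ t).dotProduct_mulVec v v) fun t => ?_
    have hnonneg := (hL.mul_mul_conjTranspose_same (exp (t • M))).dotProduct_mulVec_nonneg v
    rw [conjTranspose_eq_transpose_of_trivial, ← Matrix.exp_transpose, transpose_smul, star_trivial,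
      Matrix.mul_neg, Matrix.neg_mul, neg_mulVec, dotProduct_neg] at hnonneg
    exact neg_nonneg.mp hnonneg
  have hlim : Tendsto q atTop (𝓝 0) := by
    have hexp := tendsto_exp_smul_atTop_nhds_zero_of_map_ofReal M hM
    have hexpT : Tendsto (fun t : ℝ => exp (t • Mᵀ)) atTop (𝓝 0) := by
      simpa [Function.comp_def, ← Matrix.exp_transpose] using
        (continuous_id.matrix_transpose.tendsto 0).comp hexp
    have hF : Tendsto (fun t : ℝ => exp (t • M) * Δ * exp (t • Mᵀ)) atTop (𝓝 0) := by
      simpa using (hexp.mul_const Δ).mul hexpT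
    have hquad : Continuous fun B : Matrix ι ι ℝ => v ⬝ᵥ B *ᵥ v :=
      continuous_const.dotProduct (continuous_id.matrix_mulVec continuous_const)
    simpa [Function.comp_def] using (hquad.tendsto 0).comp hF
  simpa [q] using hanti.le_of_tendsto hlim 0
end

theorem stmt_14_general {n : ℕ}
    (M W X X₀ : Matrix (Fin n) (Fin n) ℝ)
    (hM : IsHurwitz M)
    (hX : X.IsHermitian)
    (hXineq : (-(M * X + X * Mᵀ + W)).PosSemidef)
    (hX₀ : X₀.IsHermitian)
    (hX₀eq : M * X₀ + X₀ * Mᵀ + W = 0) :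
    (X - X₀).PosSemidef := by
  refine PosSemidef.of_neg_lyapunov_posSemidef hM (hX.sub hX₀) ?_
  have hlyap : M * (X - X₀) + (X - X₀) * Mᵀ = M * X + X * Mᵀ + W := by
    rw [← sub_zero (M * X + X * Mᵀ + W), ← hX₀eq]
    noncomm_ring
  rwa [hlyap]

/-- Comparison lemma for the continuous-time Lyapunov inequality. -/
theorem stmt_14 {n : ℕ}
    (M W X X₀ : Matrix (Fin n) (Fin n) ℝ)
    (hM : IsHurwitz M) (hW : W.IsHermitian)
    (hX : X.IsHermitian)
    (hXineq : (-(M * X + X * Mᵀ + W)).PosSemidef)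
    (hX₀ : X₀.IsHermitian)
    (hX₀eq : M * X₀ + X₀ * Mᵀ + W = 0) :
    (X - X₀).PosSemidef :=
  stmt_14_general M W X X₀ hM hX hXineq hX₀ hX₀eq
end
end

section
/- Let A* ∈ ℝ^{n×n}, B ∈ ℝ^{n×m}, let W ∈ ℝ^{n×n} be symmetric positive semidefinite, let Q₀ ∈ ℝ^{n×n} be symmetric, let R ∈ ℝ^{m×m} be symmetric positive semidefinite, and let L ∈ ℝ^{m×n}. Define the feasible set F = {(Y, X) ∈ ℝ^{m×n} × ℝ^{n×n} : X symmetric positive definite and (A*X + BY)X⁻¹(A*X + BY)ᵀ − X + W ⪯ 0}, and the cost f(Y, X) = trace(Q₀X) + trace(R·Y X⁻¹ Yᵀ) + 2·trace(LᵀY). Suppose X* ∈ ℝ^{n×n} is symmetric positive definite, (0, X*) ∈ F, and f(Y, X) ≥ f(0, X*) = trace(Q₀X*) for all (Y, X) ∈ F (i.e., (0, X*) minimizes f over F). Then for every (Y, X) ∈ F, f(Y, X) − trace(Q₀X*) ≥ trace(R·Y X⁻¹ Yᵀ). -/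
open Matrix

noncomputable section

/-- Feasibility for the convex reformulation of the discrete-time LQR:
`X` is symmetric positive definite and
`(A*X + BY)X⁻¹(A*X + BY)ᵀ − X + W ⪯ 0`. -/
def Feasible {n m : ℕ} (Astar : Matrix (Fin n) (Fin n) ℝ) (B : Matrix (Fin n) (Fin m) ℝ)
    (W : Matrix (Fin n) (Fin n) ℝ) (Y : Matrix (Fin m) (Fin n) ℝ)
    (X : Matrix (Fin n) (Fin n) ℝ) : Prop :=
  X.PosDef ∧
    (-((Astar * X + B * Y) * X⁻¹ * (Astar * X + B * Y)ᵀ - X + W)).PosSemidef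

/-- Cost of the convex reformulation:
`f(Y, X) = trace(Q₀X) + trace(R·Y X⁻¹ Yᵀ) + 2·trace(LᵀY)`. -/
def cost {n m : ℕ} (Q0 : Matrix (Fin n) (Fin n) ℝ) (R : Matrix (Fin m) (Fin m) ℝ)
    (L : Matrix (Fin m) (Fin n) ℝ) (Y : Matrix (Fin m) (Fin n) ℝ)
    (X : Matrix (Fin n) (Fin n) ℝ) : ℝ :=
  Matrix.trace (Q0 * X) + Matrix.trace (R * (Y * X⁻¹ * Yᵀ)) +
    2 * Matrix.trace (Lᵀ * Y)

/-!
Along the segment `t ↦ (t • Y, t • X + (1 - t) • X*)` from the minimiser to a feasible `(Y, X)`,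
which is feasible because the matrix fractional function `(M, X) ↦ M X⁻¹ Mᵀ` is jointly convex
(Schur complements), the cost equals `trace (Q₀ X*) + t c + t² g t` with
`c = trace (Q₀ X) + 2 trace (Lᵀ Y) - trace (Q₀ X*)` and `g` continuous at `0`.
Optimality of `(0, X*)` gives `c + t g t ≥ 0` for `t ∈ (0, 1]`; letting `t → 0` gives `c ≥ 0`.
-/

open scoped ComplexOrder

namespace Matrix

variable {ι κ 𝕜 : Type*} [RCLike 𝕜]

theorem PosDef.smul_add_smul {X₁ X₂ : Matrix ι ι 𝕜} (h₁ : X₁.PosDef) (h₂ : X₂.PosDef)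
    {a b : ℝ} (ha : 0 ≤ a) (hb : 0 ≤ b) (hab : a + b = 1) : (a • X₁ + b • X₂).PosDef := by
  rcases ha.eq_or_lt with rfl | ha
  · obtain rfl : b = 1 := by linarith
    simpa using h₂
  · exact (h₁.smul ha).add_posSemidef (h₂.posSemidef.smul hb)

variable [Fintype ι] [DecidableEq ι] [Finite κ]

theorem PosDef.posSemidef_fromBlocks_mul_inv_mul_conjTranspose {X : Matrix ι ι 𝕜}
    (hX : X.PosDef) (M : Matrix κ ι 𝕜) :
    (fromBlocks X Mᴴ M (M * X⁻¹ * Mᴴ)).PosSemidef := by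
  have := hX.isUnit.invertible
  simpa using (hX.fromBlocks₁₁ Mᴴ (M * X⁻¹ * Mᴴ)).2
    (by simpa using PosSemidef.zero)

theorem PosDef.posSemidef_sub_mul_inv_mul_conjTranspose {X : Matrix ι ι 𝕜} (hX : X.PosDef)
    {M : Matrix κ ι 𝕜} {S : Matrix κ κ 𝕜} (h : (fromBlocks X Mᴴ M S).PosSemidef) :
    (S - M * X⁻¹ * Mᴴ).PosSemidef := by
  have := hX.isUnit.invertible
  simpa using (hX.fromBlocks₁₁ Mᴴ S).1 (by simpa using h)

/-- Joint convexity of the matrix fractional function `(M, X) ↦ M X⁻¹ Mᴴ`: the block matrix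
`[[X, Mᴴ], [M, M X⁻¹ Mᴴ]]` is affine in the data, so the Schur complement criterion passes
convex combinations through. -/
theorem PosDef.posSemidef_smul_add_smul_sub_mul_inv_mul_conjTranspose
    {X₁ X₂ : Matrix ι ι 𝕜} (h₁ : X₁.PosDef) (h₂ : X₂.PosDef) (M₁ M₂ : Matrix κ ι 𝕜)
    {a b : ℝ} (ha : 0 ≤ a) (hb : 0 ≤ b) (hab : a + b = 1) :
    (a • (M₁ * X₁⁻¹ * M₁ᴴ) + b • (M₂ * X₂⁻¹ * M₂ᴴ) -
      (a • M₁ + b • M₂) * (a • X₁ + b • X₂)⁻¹ * (a • M₁ + b • M₂)ᴴ).PosSemidef := by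
  refine (h₁.smul_add_smul h₂ ha hb hab).posSemidef_sub_mul_inv_mul_conjTranspose ?_
  have := ((h₁.posSemidef_fromBlocks_mul_inv_mul_conjTranspose M₁).smul ha).add
    ((h₂.posSemidef_fromBlocks_mul_inv_mul_conjTranspose M₂).smul hb)
  simpa only [fromBlocks_smul, fromBlocks_add, conjTranspose_add, conjTranspose_smul,
    star_trivial] using this

theorem continuousAt_inv_of_det_ne_zero {K : Type*} [NormedField K] {X : Matrix ι ι K}
    (hX : X.det ≠ 0) : ContinuousAt Inv.inv X :=
  continuousAt_matrix_inv X (by simpa only [Ring.inverse_eq_inv'] using continuousAt_inv₀ hX)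

end Matrix

open Set Filter Topology

theorem convex_feasible {n m : ℕ} (Astar : Matrix (Fin n) (Fin n) ℝ) (B : Matrix (Fin n) (Fin m) ℝ)
    (W : Matrix (Fin n) (Fin n) ℝ) :
    Convex ℝ {p : Matrix (Fin m) (Fin n) ℝ × Matrix (Fin n) (Fin n) ℝ |
      Feasible Astar B W p.1 p.2} := by
  rintro ⟨Y₁, X₁⟩ ⟨hX₁, hF₁⟩ ⟨Y₂, X₂⟩ ⟨hX₂, hF₂⟩ a b ha hb hab
  refine ⟨hX₁.smul_add_smul hX₂ ha hb hab, ?_⟩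
  have hconv := hX₁.posSemidef_smul_add_smul_sub_mul_inv_mul_conjTranspose hX₂
    (Astar * X₁ + B * Y₁) (Astar * X₂ + B * Y₂) ha hb hab
  simp only [conjTranspose_eq_transpose_of_trivial] at hconv
  obtain rfl : b = 1 - a := by linarith
  have hM : Astar * (a • X₁ + (1 - a) • X₂) + B * (a • Y₁ + (1 - a) • Y₂) =
      a • (Astar * X₁ + B * Y₁) + (1 - a) • (Astar * X₂ + B * Y₂) := by
    simp only [Matrix.mul_add, Matrix.mul_smul]
    module
  convert ((hF₁.smul ha).add (hF₂.smul hb)).add hconv using 1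
  simp only [Prod.smul_mk, Prod.mk_add_mk]
  rw [hM]
  module

theorem cost_zero_left {n m : ℕ} (Q0 : Matrix (Fin n) (Fin n) ℝ) (R : Matrix (Fin m) (Fin m) ℝ)
    (L : Matrix (Fin m) (Fin n) ℝ) (X : Matrix (Fin n) (Fin n) ℝ) :
    cost Q0 R L 0 X = trace (Q0 * X) := by
  simp [cost]

theorem cost_smul_smul_add_smul {n m : ℕ} (Q0 : Matrix (Fin n) (Fin n) ℝ)
    (R : Matrix (Fin m) (Fin m) ℝ) (L : Matrix (Fin m) (Fin n) ℝ) (Y : Matrix (Fin m) (Fin n) ℝ)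
    (X₁ X₂ : Matrix (Fin n) (Fin n) ℝ) (a b : ℝ) :
    cost Q0 R L (a • Y) (a • X₁ + b • X₂) =
      a * trace (Q0 * X₁) + b * trace (Q0 * X₂) +
        a ^ 2 * trace (R * (Y * (a • X₁ + b • X₂)⁻¹ * Yᵀ)) + a * (2 * trace (Lᵀ * Y)) := by
  simp only [cost, Matrix.mul_add, Matrix.mul_smul, Matrix.smul_mul, transpose_smul,
    trace_add, trace_smul, smul_eq_mul]
  ring

theorem nonneg_of_forall_add_mul_nonneg {c : ℝ} {g : ℝ → ℝ} (hg : ContinuousAt g 0)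
    (h : ∀ t ∈ Ioc (0 : ℝ) 1, 0 ≤ c + t * g t) : 0 ≤ c := by
  have hcont : ContinuousAt (fun t => c + t * g t) 0 := by fun_prop
  have hlim : Tendsto (fun t => c + t * g t) (𝓝[>] 0) (𝓝 c) := by
    simpa using hcont.tendsto.mono_left nhdsWithin_le_nhds
  exact ge_of_tendsto hlim (mem_of_superset (Ioc_mem_nhdsGT zero_lt_one) h)

theorem stmt_16_general {n m : ℕ}
    (Astar : Matrix (Fin n) (Fin n) ℝ) (B : Matrix (Fin n) (Fin m) ℝ)
    (W Q0 : Matrix (Fin n) (Fin n) ℝ) (R : Matrix (Fin m) (Fin m) ℝ)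
    (L : Matrix (Fin m) (Fin n) ℝ)
    (Xstar : Matrix (Fin n) (Fin n) ℝ)
    (hfeas : Feasible Astar B W 0 Xstar)
    (hmin : ∀ Y : Matrix (Fin m) (Fin n) ℝ, ∀ X : Matrix (Fin n) (Fin n) ℝ,
      Feasible Astar B W Y X → cost Q0 R L 0 Xstar ≤ cost Q0 R L Y X) :
    ∀ Y : Matrix (Fin m) (Fin n) ℝ, ∀ X : Matrix (Fin n) (Fin n) ℝ,
      Feasible Astar B W Y X →
      Matrix.trace (R * (Y * X⁻¹ * Yᵀ)) ≤
        cost Q0 R L Y X - Matrix.trace (Q0 * Xstar) := by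
  intro Y X hYX
  set g : ℝ → ℝ := fun t => trace (R * (Y * (t • X + (1 - t) • Xstar)⁻¹ * Yᵀ))
  have hinv : ContinuousAt (fun t : ℝ => (t • X + (1 - t) • Xstar)⁻¹) 0 :=
    (continuousAt_inv_of_det_ne_zero hfeas.1.det_pos.ne').comp_of_eq (by fun_prop) (by simp)
  have hg : ContinuousAt g 0 := by fun_prop
  have hseg : ∀ t ∈ Ioc (0 : ℝ) 1,
      0 ≤ (trace (Q0 * X) + 2 * trace (Lᵀ * Y) - trace (Q0 * Xstar)) + t * g t := by
    rintro t ⟨ht₀, ht₁⟩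
    have hfeas_t := convex_feasible Astar B W (show (Y, X) ∈ _ from hYX)
      (show (0, Xstar) ∈ _ from hfeas) ht₀.le (sub_nonneg.2 ht₁) (add_sub_cancel t 1)
    simp only [Prod.smul_mk, Prod.mk_add_mk, smul_zero, add_zero] at hfeas_t
    have h := hmin _ _ hfeas_t
    rw [cost_zero_left, cost_smul_smul_add_smul] at h
    nlinarith
  have hc := nonneg_of_forall_add_mul_nonneg hg hseg
  unfold cost
  linarith

/-- Partial quadratic growth of the convex reformulation of the discrete-time LQR. -/
theorem stmt_16 {n m : ℕ}
    (Astar : Matrix (Fin n) (Fin n) ℝ) (B : Matrix (Fin n) (Fin m) ℝ)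
    (W Q0 : Matrix (Fin n) (Fin n) ℝ) (R : Matrix (Fin m) (Fin m) ℝ)
    (L : Matrix (Fin m) (Fin n) ℝ)
    (Xstar : Matrix (Fin n) (Fin n) ℝ)
    (hW : W.PosSemidef) (hQ0 : Q0.IsHermitian) (hR : R.PosSemidef)
    (hXs : Xstar.PosDef)
    (hfeas : Feasible Astar B W 0 Xstar)
    (hval : cost Q0 R L 0 Xstar = Matrix.trace (Q0 * Xstar))
    (hmin : ∀ Y : Matrix (Fin m) (Fin n) ℝ, ∀ X : Matrix (Fin n) (Fin n) ℝ,
      Feasible Astar B W Y X → cost Q0 R L 0 Xstar ≤ cost Q0 R L Y X) :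
    ∀ Y : Matrix (Fin m) (Fin n) ℝ, ∀ X : Matrix (Fin n) (Fin n) ℝ,
      Feasible Astar B W Y X →
      Matrix.trace (R * (Y * X⁻¹ * Yᵀ)) ≤
        cost Q0 R L Y X - Matrix.trace (Q0 * Xstar) :=
  stmt_16_general Astar B W Q0 R L Xstar hfeas hmin
end
end
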